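/- arXiv:1810.01821 — 6 statements merged into one kernel-verified Lean document; each statement's English description precedes it below -/
import Mathlib

section
/- For every real number x that is not an integer multiple of 2π, the Abel (Euler) sum of the series ∑_{n=1}^∞ sin(nx) exists and equals sin x / (2(1 − cos x)); that is, lim_{r→1⁻} ∑_{n=1}^∞ rⁿ sin(nx) = sin x / (2(1 − cos x)). -/
/-!
Put `z = r e^{ix}`. For `|r| < 1` the series is the imaginary part of the geometric series
`∑ z^(n+1) = z / (1 - z)`, and `Im (z / (1 - z)) = Im z / |1 - z|²`, which is the rational
function `r sin x / (1 - 2 r cos x + r²)` of `r`. Its denominator at `r = 1` is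
`2 (1 - cos x)`, nonzero since `x ∉ 2πℤ`, so the Abel limit is its value at `r = 1`.
-/

open Filter Real Topology

namespace Complex

theorem im_div_one_sub (z : ℂ) : (z / (1 - z)).im = z.im / normSq (1 - z) := by
  simp only [div_im, sub_re, sub_im, one_re, one_im]
  ring

theorem im_ofReal_mul_exp_ofReal_mul_I_pow (r x : ℝ) (n : ℕ) :
    ((r * exp (x * I)) ^ n).im = r ^ n * Real.sin (n * x) := by
  rw [mul_pow, ← exp_nat_mul, ← mul_assoc, ← ofReal_pow, ← ofReal_natCast, ← ofReal_mul,
    im_ofReal_mul, exp_ofReal_mul_I_im]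

theorem normSq_one_sub_ofReal_mul_exp_ofReal_mul_I (r x : ℝ) :
    normSq (1 - r * exp (x * I)) = 1 - 2 * r * Real.cos x + r ^ 2 := by
  rw [normSq_apply]
  simp only [sub_re, sub_im, one_re, one_im, re_ofReal_mul, im_ofReal_mul,
    exp_ofReal_mul_I_re, exp_ofReal_mul_I_im]
  linear_combination r ^ 2 * Real.sin_sq_add_cos_sq x

end Complex

open Complex in
theorem hasSum_pow_succ_mul_sin {r : ℝ} (hr : |r| < 1) (x : ℝ) :
    HasSum (fun n : ℕ => r ^ (n + 1) * Real.sin ((n + 1) * x))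
      (r * Real.sin x / (1 - 2 * r * Real.cos x + r ^ 2)) := by
  set z : ℂ := r * exp (x * I)
  have hz : ‖z‖ < 1 := by
    simpa [z, norm_exp_ofReal_mul_I] using hr
  have hgeom : HasSum (fun n : ℕ => z ^ (n + 1)) (z / (1 - z)) := by
    simpa only [pow_succ', div_eq_mul_inv] using (hasSum_geometric_of_norm_lt_one hz).mul_left z
  convert Complex.hasSum_im hgeom using 1
  · ext n
    rw [im_ofReal_mul_exp_ofReal_mul_I_pow, Nat.cast_succ]
  · rw [im_div_one_sub, normSq_one_sub_ofReal_mul_exp_ofReal_mul_I, im_ofReal_mul,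
      exp_ofReal_mul_I_im]

/-- For every real `x` that is not an integer multiple of `2π`, the Abel (Euler) sum of
`∑_{n=1}^∞ sin(nx)` exists and equals `sin x / (2(1 - cos x))`. -/
theorem abel_sum_sin (x : ℝ) (hx : ∀ k : ℤ, x ≠ 2 * Real.pi * k) :
    Tendsto (fun r : ℝ => ∑' n : ℕ, r ^ (n + 1) * Real.sin ((n + 1) * x))
      (nhdsWithin 1 (Set.Iio 1))
      (nhds (Real.sin x / (2 * (1 - Real.cos x)))) := by
  have hcos : Real.cos x ≠ 1 := fun h => by
    obtain ⟨k, hk⟩ := (Real.cos_eq_one_iff x).1 h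
    exact hx k (by rw [← hk]; ring)
  have hcont : ContinuousAt (fun r : ℝ => r * Real.sin x / (1 - 2 * r * Real.cos x + r ^ 2)) 1 :=
    ContinuousAt.div (by fun_prop) (by fun_prop) (by contrapose! hcos; linarith)
  have hvalue : (1 : ℝ) * Real.sin x / (1 - 2 * 1 * Real.cos x + 1 ^ 2)
      = Real.sin x / (2 * (1 - Real.cos x)) := by ring
  rw [← hvalue]
  refine (tendsto_nhdsWithin_of_tendsto_nhds hcont.tendsto).congr' ?_
  filter_upwards [Ioo_mem_nhdsLT (by norm_num : (-1 : ℝ) < 1)] with r hr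
  exact (hasSum_pow_succ_mul_sin (abs_lt.2 hr) x).tsum_eq.symm
end

section
/- For every real number x with 0 < x < 2π, the series ∑_{n=1}^∞ sin(nx)/n converges and its sum equals (π − x)/2. -/
open Filter Real Topology Finset

/-!
For `z = e^{ix} ≠ 1` on the unit circle the partial sums of `∑ zⁿ` are bounded, so Dirichlet's
test makes `∑ zⁿ/n` converge, and Abel's limit theorem identifies its sum with the limit as
`r ↑ 1` of `∑ (rz)ⁿ/n = -log (1 - rz)`, that is, with `-log (1 - z)`. Since
`1 - e^{ix} = 2 sin (x/2) e^{i(x-π)/2}` with `sin (x/2) > 0`, the imaginary part of `-log (1 - z)`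
is `(π - x)/2`.
-/

theorem norm_geom_sum_le_of_norm_le_one {𝕜 : Type*} [NormedDivisionRing 𝕜] {z : 𝕜}
    (hz : ‖z‖ ≤ 1) (hz1 : z ≠ 1) (n : ℕ) : ‖∑ i ∈ range n, z ^ i‖ ≤ 2 / ‖z - 1‖ := by
  rw [geom_sum_eq hz1, norm_div]
  gcongr
  calc ‖z ^ n - 1‖ ≤ ‖z ^ n‖ + ‖(1 : 𝕜)‖ := norm_sub_le _ _
    _ ≤ 2 := by rw [norm_pow, norm_one]; linarith [pow_le_one₀ (norm_nonneg z) hz (n := n)]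

theorem cauchySeq_sum_range_pow_succ_div {𝕜 : Type*} [RCLike 𝕜] {z : 𝕜} (hz : ‖z‖ ≤ 1)
    (hz1 : z ≠ 1) : CauchySeq fun N ↦ ∑ n ∈ range N, z ^ (n + 1) / (n + 1) := by
  have hanti : Antitone fun n : ℕ ↦ 1 / ((n : ℝ) + 1) := fun a b hab ↦
    one_div_le_one_div_of_le (by positivity) (by gcongr)
  have hbound (N : ℕ) : ‖∑ i ∈ range N, z ^ (i + 1)‖ ≤ 2 / ‖z - 1‖ := by
    simp_rw [pow_succ', ← mul_sum, norm_mul]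
    exact (mul_le_of_le_one_left (norm_nonneg _) hz).trans
      (norm_geom_sum_le_of_norm_le_one hz hz1 N)
  convert hanti.cauchySeq_series_mul_of_tendsto_zero_of_bounded
    tendsto_one_div_add_atTop_nhds_zero_nat hbound using 3 with N n
  rw [RCLike.real_smul_eq_coe_mul]
  push_cast
  ring

namespace Complex

theorem re_lt_one_of_norm_le_one {z : ℂ} (hz : ‖z‖ ≤ 1) (hz1 : z ≠ 1) : z.re < 1 := by
  by_contra! h
  have hre : z.re = ‖z‖ := le_antisymm (re_le_norm z) (hz.trans h)
  have him : z.im = 0 := abs_re_eq_norm.mp (by rw [hre, abs_norm])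
  exact hz1 (ext (by simp; linarith) him)

theorem one_sub_mem_slitPlane_of_norm_le_one {z : ℂ} (hz : ‖z‖ ≤ 1) (hz1 : z ≠ 1) :
    1 - z ∈ slitPlane :=
  Or.inl (by simpa using re_lt_one_of_norm_le_one hz hz1)

theorem tendsto_sum_range_pow_succ_div {z : ℂ} (hz : ‖z‖ ≤ 1) (hz1 : z ≠ 1) :
    Tendsto (fun N ↦ ∑ n ∈ range N, z ^ (n + 1) / (n + 1)) atTop (𝓝 (-log (1 - z))) := by
  obtain ⟨l, hl⟩ := cauchySeq_tendsto_of_complete (cauchySeq_sum_range_pow_succ_div hz hz1)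
  suffices l = -log (1 - z) from this ▸ hl
  -- Abel's theorem wants the series indexed from `0`; its `n = 0` term is `1 / 0 = 0`.
  have hl₀ : Tendsto (fun N ↦ ∑ n ∈ range N, z ^ n / n) atTop (𝓝 l) := by
    rw [← tendsto_add_atTop_iff_nat 1]
    simpa [sum_range_succ'] using hl
  have habel := tendsto_map'_iff.mp (tendsto_tsum_powerSeries_nhdsWithin_lt hl₀)
  have hlog : Tendsto (fun r : ℝ ↦ -log (1 - z * r)) (𝓝[<] 1) (𝓝 (-log (1 - z))) := by
    have hcont : ContinuousAt (fun w ↦ -log (1 - z * w)) 1 :=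
      ((continuousAt_clog (one_sub_mem_slitPlane_of_norm_le_one hz hz1)).comp_of_eq
        (by fun_prop) (by rw [mul_one])).neg
    have hofReal : Tendsto ofReal (𝓝[<] (1 : ℝ)) (𝓝 1) :=
      (continuous_ofReal.tendsto 1).mono_left nhdsWithin_le_nhds
    simpa only [mul_one, Function.comp_def] using hcont.tendsto.comp hofReal
  have hsum : (fun r : ℝ ↦ ∑' n : ℕ, z ^ n / n * (r : ℂ) ^ n) =ᶠ[𝓝[<] 1]
      fun r ↦ -log (1 - z * r) := by
    filter_upwards [Ioo_mem_nhdsLT (show (-1 : ℝ) < 1 by norm_num)] with r hr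
    have hzr : ‖z * r‖ < 1 := by
      rw [norm_mul, norm_real, Real.norm_eq_abs]
      exact mul_lt_one_of_nonneg_of_lt_one_right hz (abs_nonneg r) (abs_lt.mpr hr)
    simp_rw [← (hasSum_taylorSeries_neg_log hzr).tsum_eq, mul_pow, mul_div_right_comm]
  exact tendsto_nhds_unique (habel.congr' hsum) hlog

theorem one_sub_exp_mul_I (θ : ℝ) :
    1 - exp (θ * I) = ↑(2 * Real.sin (θ / 2)) * exp (↑((θ - π) / 2) * I) := by
  set w := exp (θ / 2 * I)
  have hsq : exp (θ * I) = w ^ 2 := by rw [← exp_nat_mul]; push_cast; ring_nf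
  have hshift : exp (↑((θ - π) / 2) * I) = -I * w := by
    rw [show ↑((θ - π) / 2) * I = θ / 2 * I + -(π / 2 * I) by push_cast; ring, exp_add, exp_neg,
      exp_pi_div_two_mul_I, inv_I, mul_comm]
  have hinv : exp (-(θ / 2) * I) * w = 1 := by rw [← exp_add]; ring_nf; exact exp_zero
  rw [hsq, hshift]
  push_cast
  rw [sin]
  linear_combination -hinv + (exp (-(θ / 2) * I) * w - w ^ 2) * I_sq

theorem exp_mul_I_ne_one {θ : ℝ} (h0 : 0 < θ) (h2π : θ < 2 * π) : exp (θ * I) ≠ 1 := by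
  have hsin : 0 < Real.sin (θ / 2) := Real.sin_pos_of_pos_of_lt_pi (by linarith) (by linarith)
  refine (sub_ne_zero.mp ?_).symm
  rw [one_sub_exp_mul_I]
  exact mul_ne_zero (ofReal_ne_zero.mpr (by positivity)) (exp_ne_zero _)

theorem arg_one_sub_exp_mul_I {θ : ℝ} (h0 : 0 < θ) (h2π : θ < 2 * π) :
    arg (1 - exp (θ * I)) = (θ - π) / 2 := by
  have hsin : 0 < Real.sin (θ / 2) := Real.sin_pos_of_pos_of_lt_pi (by linarith) (by linarith)
  rw [one_sub_exp_mul_I, arg_real_mul _ (by positivity), exp_mul_I,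
    arg_cos_add_sin_mul_I ⟨by linarith, by linarith⟩]

theorem im_exp_mul_I_pow_succ_div (θ : ℝ) (n : ℕ) :
    (exp (θ * I) ^ (n + 1) / (n + 1)).im = Real.sin ((n + 1) * θ) / (n + 1) := by
  have hpow : exp (θ * I) ^ (n + 1) = exp (↑((n + 1) * θ) * I) := by
    rw [← exp_nat_mul]; push_cast; ring_nf
  have hden : (n + 1 : ℂ) = ((n + 1 : ℝ) : ℂ) := by push_cast; rfl
  rw [hpow, hden, div_ofReal_im, exp_ofReal_mul_I_im]

end Complex

/-- For every real `0 < x < 2π`, the series `∑_{n=1}^∞ sin(nx)/n` converges and its sum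
equals `(π - x)/2`. -/
theorem fourier_sawtooth (x : ℝ) (hx0 : 0 < x) (hx2 : x < 2 * Real.pi) :
    Tendsto (fun N : ℕ => ∑ n ∈ Finset.range N, Real.sin ((n + 1) * x) / (n + 1))
      atTop (nhds ((Real.pi - x) / 2)) := by
  have hz : ‖Complex.exp (x * Complex.I)‖ ≤ 1 := (Complex.norm_exp_ofReal_mul_I x).le
  have hlim := (Complex.continuous_im.tendsto _).comp
    (Complex.tendsto_sum_range_pow_succ_div hz (Complex.exp_mul_I_ne_one hx0 hx2))
  have him : (-Complex.log (1 - Complex.exp (x * Complex.I))).im = (π - x) / 2 := by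
    rw [Complex.neg_im, Complex.log_im, Complex.arg_one_sub_exp_mul_I hx0 hx2]
    ring
  rw [him] at hlim
  simpa [Function.comp_def, Complex.im_sum, Complex.im_exp_mul_I_pow_succ_div] using hlim
end

section
/- For every real x with 0 < |x| < 2π, the power series ∑_{n=0}^∞ ζ(−2n−1) · (−1)ⁿ x^{2n+1}/(2n+1)! converges and its sum equals sin x / (2(1 − cos x)) − 1/x, where ζ denotes the (analytically continued) Riemann zeta function. -/
/-!
For `0 < ‖z‖ < 2π` the Bernoulli series `∑ Bₙ zⁿ / n!` converges absolutely, since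
`|B₂ₖ| / (2k)! = 2 ζ(2k) / (2π)^(2k)`, and its Cauchy product with
`(exp z - 1) / z = ∑ zⁿ / (n + 1)!` is `1` by the recursion defining the Bernoulli numbers; so
it sums to `z / (exp z - 1)`. The odd terms beyond `n = 1` vanish, and at `z = ix` the even part
`z / (exp z - 1) + z / 2 - 1` equals `x sin x / (2(1 - cos x)) - 1`. Dividing by `x` and using
`ζ(-2k-1) = -B₂ₖ₊₂ / (2k + 2)` gives the series of the theorem.
-/

open Filter Real Topology Finset

theorem abs_bernoulli_two_mul_div_factorial_le {k : ℕ} (hk : k ≠ 0) :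
    |(bernoulli (2 * k) : ℝ)| / (2 * k).factorial ≤ 4 / (2 * π) ^ (2 * k) := by
  have hζ := hasSum_zeta_nat hk
  have hζ_le : (-1 : ℝ) ^ (k + 1) * 2 ^ (2 * k - 1) * π ^ (2 * k) * bernoulli (2 * k) /
      (2 * k).factorial ≤ 2 := by
    refine (hasSum_le (fun n => ?_) hζ hasSum_zeta_two).trans ?_
    · rcases n.eq_zero_or_pos with rfl | hn
      · simp [hk]
      · gcongr
        · exact_mod_cast hn
        · omega
    · nlinarith [pi_lt_d2, pi_pos]
  have h2pow : (2 * π) ^ (2 * k) = 2 * (2 ^ (2 * k - 1) * π ^ (2 * k)) := by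
    rw [mul_pow, ← mul_assoc, ← pow_succ', Nat.sub_add_cancel (by omega)]
  rw [le_div_iff₀ (by positivity), h2pow]
  calc |(bernoulli (2 * k) : ℝ)| / (2 * k).factorial * (2 * (2 ^ (2 * k - 1) * π ^ (2 * k)))
      = 2 * |(-1 : ℝ) ^ (k + 1) * 2 ^ (2 * k - 1) * π ^ (2 * k) * bernoulli (2 * k) /
          (2 * k).factorial| := by
        simp only [abs_div, abs_mul, abs_pow, abs_neg, abs_one, one_pow, Nat.abs_cast, abs_two,
          abs_of_pos pi_pos]
        ring
    _ ≤ 4 := by rw [abs_of_nonneg (hζ.nonneg fun n => by positivity)]; linarith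

theorem abs_bernoulli_div_factorial_le (n : ℕ) :
    |(bernoulli n : ℝ)| / n.factorial ≤ 4 / (2 * π) ^ n := by
  obtain ⟨k, rfl | rfl⟩ := n.even_or_odd'
  · rcases eq_or_ne k 0 with rfl | hk
    · norm_num
    · exact abs_bernoulli_two_mul_div_factorial_le hk
  · rcases eq_or_ne k 0 with rfl | hk
    · rw [le_div_iff₀ (by positivity)]
      norm_num
      linarith [pi_le_four]
    · rw [bernoulli_eq_zero_of_odd (odd_two_mul_add_one k) (by omega)]
      simp only [Rat.cast_zero, abs_zero, zero_div]
      positivity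

open PowerSeries in
theorem sum_antidiagonal_bernoulli_div_factorial_mul (n : ℕ) :
    ∑ p ∈ antidiagonal n, (bernoulli p.1 / p.1.factorial : ℚ) * (1 / (p.2 + 1).factorial) =
      if n = 0 then 1 else 0 := by
  have hexp : exp ℚ - (1 : ℚ⟦X⟧) = X * PowerSeries.mk fun j => (1 / (j + 1).factorial : ℚ) := by
    ext (_ | j) <;> simp [coeff_exp, coeff_succ_X_mul]
  have h := bernoulliPowerSeries_mul_exp_sub_one ℚ
  rw [hexp, mul_left_comm, mul_eq_left₀ X_ne_zero] at h
  simpa [bernoulliPowerSeries, coeff_mul, coeff_one] using congr_arg (coeff n) h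

namespace Complex

theorem exp_ne_one_of_norm_lt {z : ℂ} (hz0 : z ≠ 0) (hz : ‖z‖ < 2 * π) : exp z ≠ 1 := by
  rw [Ne, exp_eq_one_iff]
  rintro ⟨n, rfl⟩
  have hn : n ≠ 0 := by rintro rfl; simp at hz0
  have h2π : ‖(2 * π * I : ℂ)‖ = 2 * π := by simp [abs_of_pos pi_pos]
  rw [norm_mul, h2π, norm_intCast] at hz
  have : (1 : ℝ) ≤ |(n : ℝ)| := by exact_mod_cast Int.one_le_abs hn
  nlinarith [pi_pos]

theorem hasSum_pow_div_factorial_succ {z : ℂ} (hz : z ≠ 0) :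
    HasSum (fun n => z ^ n / (n + 1).factorial) ((exp z - 1) / z) := by
  have hexp : HasSum (fun n => z ^ n / n.factorial) (exp z) := by
    simpa [← exp_eq_exp_ℂ] using NormedSpace.expSeries_div_hasSum_exp z
  have hshift : HasSum (fun n => z ^ (n + 1) / (n + 1).factorial) (exp z - 1) := by
    simpa using (hasSum_nat_add_iff' 1).mpr hexp
  simpa [pow_succ, mul_div_right_comm _ z, hz] using hshift.div_const z

theorem summable_norm_bernoulli_div_factorial_mul_pow {z : ℂ} (hz : ‖z‖ < 2 * π) :
    Summable fun n => ‖(bernoulli n : ℂ) / n.factorial * z ^ n‖ := by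
  have hq : ‖z‖ / (2 * π) < 1 := (div_lt_one (by positivity)).mpr hz
  refine .of_nonneg_of_le (fun _ => norm_nonneg _) (fun n => ?_)
    ((summable_geometric_of_lt_one (by positivity) hq).mul_left 4)
  calc ‖(bernoulli n : ℂ) / n.factorial * z ^ n‖
      = |(bernoulli n : ℝ)| / n.factorial * ‖z‖ ^ n := by
        rw [norm_mul, norm_div, norm_pow, ← ofReal_ratCast, norm_real, norm_natCast,
          Real.norm_eq_abs]
    _ ≤ 4 / (2 * π) ^ n * ‖z‖ ^ n := by have := abs_bernoulli_div_factorial_le n; gcongr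
    _ = 4 * (‖z‖ / (2 * π)) ^ n := by rw [div_pow]; ring

theorem hasSum_bernoulli_div_factorial_mul_pow {z : ℂ} (hz0 : z ≠ 0) (hz : ‖z‖ < 2 * π) :
    HasSum (fun n => (bernoulli n : ℂ) / n.factorial * z ^ n) (z / (exp z - 1)) := by
  have hb : Summable fun n => ‖z ^ n / (n + 1).factorial‖ := by
    refine .of_nonneg_of_le (fun _ => norm_nonneg _) (fun n => ?_)
      (Real.summable_pow_div_factorial ‖z‖)
    rw [norm_div, norm_pow, norm_natCast]
    gcongr
    exact n.le_succ
  have hcauchy := tsum_mul_tsum_eq_tsum_sum_antidiagonal_of_summable_norm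
    (summable_norm_bernoulli_div_factorial_mul_pow hz) hb
  have hcoeff (n : ℕ) : ∑ p ∈ antidiagonal n,
      (bernoulli p.1 : ℂ) / p.1.factorial * z ^ p.1 * (z ^ p.2 / (p.2 + 1).factorial) =
        ((if n = 0 then 1 else 0 : ℚ) : ℂ) * z ^ n := by
    rw [← sum_antidiagonal_bernoulli_div_factorial_mul n, Rat.cast_sum, sum_mul]
    refine sum_congr rfl fun p hp => ?_
    rw [← mem_antidiagonal.mp hp, pow_add]
    push_cast
    ring
  have hone : ∑' n, ∑ p ∈ antidiagonal n,
      (bernoulli p.1 : ℂ) / p.1.factorial * z ^ p.1 * (z ^ p.2 / (p.2 + 1).factorial) = 1 := by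
    rw [tsum_congr hcoeff, tsum_eq_single 0 fun n hn => by simp [hn]]
    simp
  rw [(hasSum_pow_div_factorial_succ hz0).tsum_eq, hone, ← mul_div_assoc,
    div_eq_one_iff_eq hz0] at hcauchy
  rw [← eq_div_of_mul_eq (sub_ne_zero.mpr (exp_ne_one_of_norm_lt hz0 hz)) hcauchy]
  exact (summable_norm_bernoulli_div_factorial_mul_pow hz).of_norm.hasSum

theorem hasSum_bernoulli_two_mul_add_two_div_factorial_mul_pow {z : ℂ} (hz0 : z ≠ 0)
    (hz : ‖z‖ < 2 * π) :
    HasSum (fun k => (bernoulli (2 * k + 2) : ℂ) / (2 * k + 2).factorial * z ^ (2 * k + 2))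
      (z / (exp z - 1) + z / 2 - 1) := by
  have h := (hasSum_nat_add_iff' 2).mpr (hasSum_bernoulli_div_factorial_mul_pow hz0 hz)
  have hhead : z / (exp z - 1) - ∑ n ∈ range 2, (bernoulli n : ℂ) / n.factorial * z ^ n =
      z / (exp z - 1) + z / 2 - 1 := by
    simp only [sum_range_succ, range_one, sum_singleton, bernoulli_zero, bernoulli_one,
      Nat.factorial_zero, Nat.factorial_one, pow_zero, pow_one]
    push_cast
    ring
  rw [hhead] at h
  refine (Function.Injective.hasSum_iff (f := fun n => (bernoulli (n + 2) : ℂ) /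
    (n + 2).factorial * z ^ (n + 2)) (mul_right_injective₀ two_ne_zero) fun n hn => ?_).mpr h
  have hodd : Odd n := Nat.not_even_iff_odd.mp fun ⟨m, hm⟩ => hn ⟨m, show 2 * m = n by omega⟩
  simp [bernoulli_eq_zero_of_odd (hodd.add_even even_two) (by omega)]

theorem mul_I_div_exp_mul_I_sub_one_add {w : ℂ} (hw : exp (w * I) ≠ 1) :
    w * I / (exp (w * I) - 1) + w * I / 2 = w * sin w / (2 * (1 - cos w)) := by
  have he : exp (w * I) ≠ 0 := exp_ne_zero _
  have he1 : exp (w * I) - 1 ≠ 0 := sub_ne_zero.mpr hw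
  have hcos : 2 * (1 - cos w) = -(exp (w * I) - 1) ^ 2 / exp (w * I) := by
    rw [cos, neg_mul, exp_neg]
    field_simp
    ring
  rw [hcos, sin, neg_mul, exp_neg]
  field_simp
  ring

end Complex

open Complex in
theorem riemannZeta_neg_two_mul_sub_one_mul_pow_div (k : ℕ) (x : ℂ) :
    riemannZeta (-2 * k - 1) * (-1) ^ k * x ^ (2 * k + 1) / (2 * k + 1).factorial =
      (bernoulli (2 * k + 2) : ℂ) / (2 * k + 2).factorial * (x * I) ^ (2 * k + 2) / x := by
  have hζ := riemannZeta_neg_nat_eq_bernoulli (2 * k + 1)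
  have hI : I ^ (2 * k + 2) = (-1) ^ (k + 1) := by
    rw [show 2 * k + 2 = 2 * (k + 1) by ring, pow_mul, I_sq]
  push_cast at hζ
  rw [show -2 * (k : ℂ) - 1 = -(2 * k + 1) by ring, hζ, (odd_two_mul_add_one k).neg_one_pow,
    mul_pow, hI, Nat.factorial_succ (2 * k + 1)]
  rcases eq_or_ne x 0 with rfl | hx
  · simp
  push_cast
  field_simp
  ring

/-- For every real `x` with `0 < |x| < 2π`, the power series
`∑_{n=0}^∞ ζ(-2n-1) (-1)ⁿ x^(2n+1)/(2n+1)!` converges, with sum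
`sin x / (2(1 - cos x)) - 1/x`. Here `ζ` is the analytically continued Riemann zeta
function. -/
theorem zeta_odd_neg_power_series (x : ℝ) (hx0 : 0 < |x|) (hx2 : |x| < 2 * Real.pi) :
    Tendsto (fun N : ℕ => ∑ n ∈ Finset.range N,
        riemannZeta (-2 * (n : ℂ) - 1) * (-1) ^ n * (x : ℂ) ^ (2 * n + 1) /
          (Nat.factorial (2 * n + 1)))
      atTop (nhds ((Real.sin x / (2 * (1 - Real.cos x)) - 1 / x : ℝ) : ℂ)) := by
  have hx : (x : ℂ) ≠ 0 := by exact_mod_cast abs_pos.mp hx0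
  have hxI : (x : ℂ) * Complex.I ≠ 0 := mul_ne_zero hx Complex.I_ne_zero
  have hnorm : ‖(x : ℂ) * Complex.I‖ < 2 * π := by simpa using hx2
  have hsum :=
    (Complex.hasSum_bernoulli_two_mul_add_two_div_factorial_mul_pow hxI hnorm).div_const x
  rw [Complex.mul_I_div_exp_mul_I_sub_one_add (Complex.exp_ne_one_of_norm_lt hxI hnorm)] at hsum
  simp_rw [← riemannZeta_neg_two_mul_sub_one_mul_pow_div] at hsum
  convert hsum.tendsto_sum_nat using 2
  push_cast
  field_simp
end

section
/- For every real number x that is not an integer multiple of 2π, the Abel (Euler) sum of the series ∑_{n=1}^∞ n·cos(nx) exists and equals −1/(2(1 − cos x)); that is, lim_{r→1⁻} ∑_{n=1}^∞ n rⁿ cos(nx) = −1/(2(1 − cos x)). -/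
open Filter Real Topology

/-- For every real `x` that is not an integer multiple of `2π`, the Abel (Euler) sum of
`∑_{n=1}^∞ n cos(nx)` exists and equals `-1/(2(1 - cos x))`. -/
theorem abel_sum_n_cos (x : ℝ) (hx : ∀ k : ℤ, x ≠ 2 * Real.pi * k) :
    Tendsto (fun r : ℝ => ∑' n : ℕ, (n + 1 : ℝ) * r ^ (n + 1) * Real.cos ((n + 1) * x))
      (nhdsWithin 1 (Set.Iio 1))
      (nhds (-(1 / (2 * (1 - Real.cos x))))) := by
  set e : ℂ := Complex.exp (x * Complex.I) with he
  have he1 : e ≠ 1 := by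
    intro h
    rw [he, Complex.exp_eq_one_iff] at h
    obtain ⟨n, hn⟩ := h
    apply hx n
    have h2 : (x : ℂ) * Complex.I = ((2 * Real.pi * n : ℝ) : ℂ) * Complex.I := by
      push_cast
      rw [hn]; ring
    have := mul_right_cancel₀ Complex.I_ne_zero h2
    exact_mod_cast this
  have hden : (1 : ℂ) - e ≠ 0 := sub_ne_zero.mpr (Ne.symm he1)
  have hcosne : 1 - Real.cos x ≠ 0 := by
    intro h
    have hc : Real.cos x = 1 := by linarith
    obtain ⟨n, hn⟩ := (Real.cos_eq_one_iff x).1 hc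
    exact hx n (by rw [← hn]; ring)
  -- closed form
  have key : ∀ r : ℝ, |r| < 1 →
      ∑' n : ℕ, (n + 1 : ℝ) * r ^ (n + 1) * Real.cos ((n + 1) * x)
        = (((r : ℂ) * e) / (1 - (r : ℂ) * e) ^ 2).re := by
    intro r hr
    have hz : ‖(r : ℂ) * e‖ < 1 := by
      rw [norm_mul, he, Complex.norm_exp_ofReal_mul_I, mul_one, Complex.norm_real]
      simpa using hr
    have hs := hasSum_coe_mul_geometric_of_norm_lt_one hz
    have hs1 : HasSum (fun n : ℕ => ((n : ℂ) + 1) * ((r : ℂ) * e) ^ (n + 1))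
        (((r : ℂ) * e) / (1 - (r : ℂ) * e) ^ 2) := by
      have h0 := (hasSum_nat_add_iff (f := fun n : ℕ => (n : ℂ) * ((r : ℂ) * e) ^ n) 1).mpr
        (by simpa using hs)
      simpa using h0
    have hre := hs1.mapL Complex.reCLM
    have heq : ∀ n : ℕ,
        Complex.reCLM (((n : ℂ) + 1) * ((r : ℂ) * e) ^ (n + 1))
          = (n + 1 : ℝ) * r ^ (n + 1) * Real.cos ((n + 1) * x) := by
      intro n
      have hp : ((r : ℂ) * e) ^ (n + 1)
          = ((r ^ (n + 1) : ℝ) : ℂ) * Complex.exp ((((n + 1 : ℝ) * x : ℝ)) * Complex.I) := by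
        rw [mul_pow, he, ← Complex.exp_nat_mul]
        push_cast
        ring_nf
      rw [hp]
      have : ((n : ℂ) + 1) * (((r ^ (n + 1) : ℝ) : ℂ)
            * Complex.exp ((((n + 1 : ℝ) * x : ℝ)) * Complex.I))
          = (((n + 1 : ℝ) * r ^ (n + 1) : ℝ) : ℂ)
            * Complex.exp ((((n + 1 : ℝ) * x : ℝ)) * Complex.I) := by
        push_cast; ring
      rw [this]
      rw [Complex.reCLM_apply, Complex.re_ofReal_mul, Complex.exp_ofReal_mul_I_re]
    have := (hre.congr_fun fun n => (heq n).symm).tsum_eq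
    simpa using this
  -- continuity of the closed form
  have hcont : ContinuousAt (fun r : ℝ => (((r : ℂ) * e) / (1 - (r : ℂ) * e) ^ 2).re) 1 := by
    apply Complex.continuous_re.continuousAt.comp
    apply ContinuousAt.div
    · fun_prop
    · fun_prop
    · simp only [Complex.ofReal_one, one_mul]
      exact pow_ne_zero 2 hden
  -- value at 1
  have hval : (((1 : ℝ) : ℂ) * e / (1 - ((1 : ℝ) : ℂ) * e) ^ 2).re
      = -(1 / (2 * (1 - Real.cos x))) := by
    have he0 : e ≠ 0 := Complex.exp_ne_zero _
    have hcos : ((Real.cos x : ℝ) : ℂ) = (e + e⁻¹) / 2 := by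
      rw [Complex.ofReal_cos, Complex.cos, he, ← Complex.exp_neg]
      ring_nf
    have hc2 : ((1 : ℂ) - ((Real.cos x : ℝ) : ℂ)) ≠ 0 := by
      intro h
      apply hcosne
      have : ((1 - Real.cos x : ℝ) : ℂ) = 0 := by
        rw [Complex.ofReal_sub, Complex.ofReal_one, h]
      exact_mod_cast this
    have hsq : (1 - e) ^ 2 = (-2) * ((1 : ℂ) - ((Real.cos x : ℝ) : ℂ)) * e := by
      rw [hcos]
      field_simp
      ring
    have hC : ((1 : ℝ) : ℂ) * e / (1 - ((1 : ℝ) : ℂ) * e) ^ 2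
        = ((-(1 / (2 * (1 - Real.cos x))) : ℝ) : ℂ) := by
      rw [Complex.ofReal_one, one_mul, hsq, Complex.ofReal_neg, Complex.ofReal_div,
        Complex.ofReal_mul, Complex.ofReal_sub, Complex.ofReal_one, Complex.ofReal_ofNat]
      rw [show (-2 : ℂ) * (1 - ((Real.cos x : ℝ) : ℂ)) * e
            = e * (2 * (1 - ((Real.cos x : ℝ) : ℂ)) * (-1)) from by ring,
        div_mul_cancel_left₀ he0, one_div, mul_neg_one, inv_neg]
    rw [hC, Complex.ofReal_re]
  -- combine
  have hev : ∀ᶠ r in nhdsWithin (1 : ℝ) (Set.Iio 1),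
      (((r : ℂ) * e) / (1 - (r : ℂ) * e) ^ 2).re
        = ∑' n : ℕ, (n + 1 : ℝ) * r ^ (n + 1) * Real.cos ((n + 1) * x) := by
    have h1 : ∀ᶠ r in nhdsWithin (1 : ℝ) (Set.Iio 1), r < 1 :=
      eventually_mem_nhdsWithin.mono fun r hr => hr
    have h2 : ∀ᶠ r in nhdsWithin (1 : ℝ) (Set.Iio 1), (-1 : ℝ) < r :=
      (eventually_gt_nhds (by norm_num : (-1 : ℝ) < 1)).filter_mono nhdsWithin_le_nhds
    filter_upwards [h1, h2] with r hr1 hr2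
    exact (key r (abs_lt.mpr ⟨hr2, hr1⟩)).symm
  have := (hcont.continuousWithinAt (s := Set.Iio 1)).tendsto
  rw [hval] at this
  exact this.congr' hev
end

section
/- For every real x with 0 < x < π/2, the series ∑_{n=0}^∞ (−1)ⁿ sin((2n+1)x)/(2n+1) converges and its sum equals (i/2)·(arctan(e^{−ix}) − arctan(e^{ix})), where arctan denotes the principal branch of the complex arctangent; in particular this value is real. -/
/-!
With `w = e^{ix}`, the `n`-th term of the series is the imaginary part of the `n`-th term
`(-1)ⁿ w^{2n+1}/(2n+1)` of the arctangent series. On the closed unit disc off the imaginary axis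
that series converges by Dirichlet's test, since its terms are `w (-w²)ⁿ` weighted by the
decreasing `1/(2n+1)`, and `-w² ≠ 1`. Abel's limit theorem along `r w`, `r → 1⁻`, together with
the continuity of `arctan` at `w`, identifies its sum with `arctan w`. Finally
`arctan (conj w) = conj (arctan w)`, so the right-hand side is `(i/2)(conj L - L) = Im L`.
-/

open Filter Real Topology Finset

open ComplexConjugate

lemma norm_geom_sum_le_two_div {K : Type*} [NormedDivisionRing K] {q : K} (hq : ‖q‖ ≤ 1)
    (hq1 : q ≠ 1) (n : ℕ) : ‖∑ i ∈ range n, q ^ i‖ ≤ 2 / ‖1 - q‖ := by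
  have h1q : 0 < ‖1 - q‖ := norm_pos_iff.mpr (sub_ne_zero.mpr hq1.symm)
  rw [geom_sum_eq hq1, norm_div, norm_sub_rev q]
  gcongr
  calc ‖q ^ n - 1‖ ≤ ‖q ^ n‖ + ‖(1 : K)‖ := norm_sub_le _ _
    _ ≤ 2 := by
      rw [norm_pow, norm_one]
      linarith [pow_le_one₀ (n := n) (norm_nonneg q) hq]

namespace Complex

variable {z : ℂ}

lemma sq_ne_neg_one_of_re_ne_zero (h : z.re ≠ 0) : z ^ 2 ≠ -1 := by
  intro h2
  have hI : (z - I) * (z + I) = 0 := by linear_combination h2 - I_sq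
  rcases mul_eq_zero.mp hI with hI | hI
  · exact h (by simpa using congrArg re (sub_eq_zero.mp hI))
  · exact h (by simpa using congrArg re (eq_neg_of_add_eq_zero_left hI))

lemma cauchySeq_arctan_series (hz : ‖z‖ ≤ 1) (hz2 : z ^ 2 ≠ -1) :
    CauchySeq fun N ↦ ∑ n ∈ range N, (-1) ^ n * z ^ (2 * n + 1) / ↑(2 * n + 1) := by
  have hterm : ∀ n : ℕ, (-1) ^ n * z ^ (2 * n + 1) / ↑(2 * n + 1) =
      (1 / (2 * n + 1) : ℝ) • (z * (-z ^ 2) ^ n) := by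
    intro n
    rw [real_smul]
    push_cast
    ring
  have hq : -z ^ 2 ≠ 1 := fun h ↦ hz2 (by rw [← h, neg_neg])
  simp_rw [hterm]
  refine Antitone.cauchySeq_series_mul_of_tendsto_zero_of_bounded (b := 2 / ‖1 - -z ^ 2‖)
    (fun m n hmn ↦ ?_) ?_ fun N ↦ ?_
  · gcongr
  · refine tendsto_const_nhds.div_atTop ?_
    exact tendsto_atTop_add_const_right _ _
      (tendsto_natCast_atTop_atTop.const_mul_atTop two_pos)
  · rw [← mul_sum, norm_mul]
    refine (mul_le_of_le_one_left (norm_nonneg _) hz).trans (norm_geom_sum_le_two_div ?_ hq N)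
    rw [norm_neg, norm_pow]
    exact pow_le_one₀ (norm_nonneg z) hz

lemma tendsto_arctan_ofReal_mul_nhdsLT {L : ℂ} (hz : ‖z‖ ≤ 1)
    (h : Tendsto (fun N ↦ ∑ n ∈ range N, (-1) ^ n * z ^ (2 * n + 1) / ↑(2 * n + 1)) atTop
      (𝓝 L)) :
    Tendsto (fun r : ℝ ↦ arctan (r * z)) (𝓝[<] 1) (𝓝 L) := by
  -- Abel's theorem for `∑ aₙ tⁿ` at `t = r²`, where `r ∑ aₙ r^{2n} = arctan (r z)`.
  have abel := (tendsto_map'_iff.mp (tendsto_tsum_powerSeries_nhdsWithin_lt h))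
  have hsq : Tendsto (fun r : ℝ ↦ r ^ 2) (𝓝[<] 1) (𝓝[<] 1) := by
    refine tendsto_nhdsWithin_of_tendsto_nhds_of_eventually_within _ ?_ ?_
    · simpa using ((continuous_pow 2).tendsto (1 : ℝ)).mono_left nhdsWithin_le_nhds
    · filter_upwards [Ioo_mem_nhdsLT (show (0 : ℝ) < 1 by norm_num)] with r hr
      exact pow_lt_one₀ hr.1.le hr.2 two_ne_zero
  have hofReal : Tendsto (fun r : ℝ ↦ (r : ℂ)) (𝓝[<] 1) (𝓝 1) := by
    simpa using (continuous_ofReal.tendsto (1 : ℝ)).mono_left nhdsWithin_le_nhds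
  have hlim := hofReal.mul (abel.comp hsq)
  rw [one_mul] at hlim
  refine hlim.congr' ?_
  filter_upwards [Ioo_mem_nhdsLT (show (0 : ℝ) < 1 by norm_num)] with r hr
  have hrz : ‖(r : ℂ) * z‖ < 1 := by
    rw [norm_mul, norm_real, Real.norm_of_nonneg hr.1.le]
    exact (mul_le_of_le_one_right hr.1.le hz).trans_lt hr.2
  rw [← (hasSum_arctan hrz).tsum_eq, Function.comp_apply, Function.comp_apply, ← tsum_mul_left]
  congr 1 with n
  push_cast
  ring

lemma one_add_mul_I_div_mem_slitPlane (h : z.re ≠ 0) :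
    (1 + z * I) / (1 - z * I) ∈ slitPlane := by
  have hne : 1 - z * I ≠ 0 := fun h0 ↦ h (by simpa using congrArg im h0)
  have him : ((1 + z * I) / (1 - z * I)).im = 2 * z.re / normSq (1 - z * I) := by
    rw [div_im]
    simp only [add_im, sub_im, add_re, sub_re, mul_im, mul_re, I_re, I_im, one_re, one_im]
    ring
  rw [mem_slitPlane_iff, him]
  exact Or.inr (div_ne_zero (mul_ne_zero two_ne_zero h) (normSq_pos.mpr hne).ne')

lemma continuousAt_arctan (h : (1 + z * I) / (1 - z * I) ∈ slitPlane) :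
    ContinuousAt arctan z := by
  have hne : 1 - z * I ≠ 0 := fun h0 ↦ slitPlane_ne_zero h (by rw [h0, div_zero])
  exact continuousAt_const.mul (ContinuousAt.clog (by fun_prop (disch := exact hne)) h)

lemma arctan_conj (h : ((1 + z * I) / (1 - z * I)).arg ≠ π) :
    arctan (conj z) = conj (arctan z) := by
  set u := (1 + z * I) / (1 - z * I)
  have hu : (1 + conj z * I) / (1 - conj z * I) = (conj u)⁻¹ := by
    simp only [u, map_div₀, inv_div, map_add, map_sub, map_one, map_mul, conj_I]
    ring
  have harg : (conj u).arg ≠ π := by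
    rw [arg_conj, if_neg h]
    linarith [neg_pi_lt_arg u]
  rw [arctan, arctan, hu, log_inv _ harg, log_conj _ h]
  simp only [map_mul, map_div₀, map_neg, conj_I, map_ofNat]
  ring

theorem tendsto_arctan_series (hz : ‖z‖ ≤ 1) (hre : z.re ≠ 0) :
    Tendsto (fun N ↦ ∑ n ∈ range N, (-1) ^ n * z ^ (2 * n + 1) / ↑(2 * n + 1)) atTop
      (𝓝 (arctan z)) := by
  obtain ⟨L, hL⟩ :=
    cauchySeq_tendsto_of_complete (cauchySeq_arctan_series hz (sq_ne_neg_one_of_re_ne_zero hre))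
  have hcont : Tendsto (fun r : ℝ ↦ arctan (r * z)) (𝓝[<] 1) (𝓝 (arctan z)) := by
    refine (continuousAt_arctan (one_add_mul_I_div_mem_slitPlane hre)).tendsto.comp ?_
    simpa using (((continuous_ofReal.tendsto 1).mono_left nhdsWithin_le_nhds).mul_const z :
      Tendsto (fun r : ℝ ↦ (r : ℂ) * z) (𝓝[<] 1) _)
  rwa [tendsto_nhds_unique (tendsto_arctan_ofReal_mul_nhdsLT hz hL) hcont] at hL

lemma im_arctan_series_term_exp (x : ℝ) (n : ℕ) :
    ((-1) ^ n * exp (I * x) ^ (2 * n + 1) / ↑(2 * n + 1)).im =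
      (-1 : ℝ) ^ n * Real.sin ((2 * n + 1) * x) / (2 * n + 1) := by
  have h : (-1) ^ n * exp (I * x) ^ (2 * n + 1) / ↑(2 * n + 1) =
      (((-1) ^ n / (2 * n + 1) : ℝ) : ℂ) * exp (((2 * n + 1) * x : ℝ) * I) := by
    rw [← exp_nat_mul]
    push_cast
    ring_nf
  rw [h, im_ofReal_mul, exp_ofReal_mul_I_im]
  ring

end Complex

/-- For every real `0 < x < π/2`, the series `∑_{n=0}^∞ (-1)ⁿ sin((2n+1)x)/(2n+1)` converges
and its sum equals `(i/2)(arctan(e^{-ix}) - arctan(e^{ix}))`, where `arctan` is the principal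
branch of the complex arctangent; in particular this value is real. -/
theorem alt_sin_series_arctan (x : ℝ) (hx0 : 0 < x) (hx2 : x < Real.pi / 2) :
    ∃ S : ℝ,
      Tendsto (fun N : ℕ => ∑ n ∈ Finset.range N,
          (-1 : ℝ) ^ n * Real.sin ((2 * n + 1) * x) / (2 * n + 1))
        atTop (nhds S) ∧
      (S : ℂ) = Complex.I / 2 *
        (Complex.arctan (Complex.exp (-Complex.I * x)) -
          Complex.arctan (Complex.exp (Complex.I * x))) := by
  have hw_norm : ‖Complex.exp (Complex.I * x)‖ = 1 := by
    rw [mul_comm]; exact Complex.norm_exp_ofReal_mul_I x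
  have hw_re : (Complex.exp (Complex.I * x)).re ≠ 0 := by
    rw [mul_comm, Complex.exp_ofReal_mul_I_re]
    exact (Real.cos_pos_of_mem_Ioo ⟨by linarith, hx2⟩).ne'
  set w := Complex.exp (Complex.I * x)
  have hL := Complex.tendsto_arctan_series hw_norm.le hw_re
  refine ⟨(Complex.arctan w).im, ?_, ?_⟩
  · refine ((Complex.continuous_im.tendsto _).comp hL).congr fun N ↦ ?_
    simp only [Function.comp_apply, Complex.im_sum, w, Complex.im_arctan_series_term_exp]
  · have hconj : Complex.exp (-Complex.I * x) = conj w := by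
      rw [← Complex.exp_conj]
      simp
    have harg := (Complex.mem_slitPlane_iff_arg.mp
      (Complex.one_add_mul_I_div_mem_slitPlane hw_re)).1
    have him := Complex.sub_conj (Complex.arctan w)
    push_cast at him
    rw [hconj, Complex.arctan_conj harg]
    linear_combination (Complex.I / 2) * him +
      ((Complex.arctan w).im : ℂ) * Complex.I_sq
end

section
/- For all positive integers m and n, (2/π)·∫₀^π sin(mx) · (∑_{k=1}^∞ sin(k n x)/k) dx equals n/m if n divides m, and equals 0 otherwise. (Here the inner series converges for all x ∈ (0, π) outside the finitely many points where nx is a multiple of 2π, and the integrand is integrable on [0, π].) -/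
open Filter Real Topology Finset intervalIntegral MeasureTheory

/-! The partial sums `∑_{k ≤ N} sin(kθ)/k` are bounded by 3 uniformly in `N` and `θ`. With
`s = |sin(θ/2)|`, each term with `k ≤ 1/s` is at most `2s`, because `|sin(kθ)| ≤ 2k s`; the
remaining terms sum to at most `1/((⌊1/s⌋ + 1) s) < 1` by Abel summation, since the sums
`∑ sin(kθ)` telescope after multiplication by `2 sin(θ/2)` and so are at most `1/s`.
Dominated convergence then allows integrating against `sin(mx)` term by term, and by
orthogonality of the sines on `[0, π]` only the term with `kn = m` survives, contributing
`(π/2)/k = (π/2)·n/m`. -/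

theorem abs_sum_range_mul_le_of_antitone {a b : ℕ → ℝ} {B : ℝ} (hb : Antitone b)
    (hb0 : ∀ i, 0 ≤ b i) (ha : ∀ j, |∑ i ∈ range j, a i| ≤ B) (n : ℕ) :
    |∑ i ∈ range n, b i * a i| ≤ B * b 0 := by
  have hparts := sum_range_by_parts b a n
  simp only [smul_eq_mul] at hparts
  rw [hparts]
  calc _ ≤ b (n - 1) * B + ∑ i ∈ range (n - 1), (b i - b (i + 1)) * B := by
        refine (abs_sub _ _).trans (add_le_add ?_ ((abs_sum_le_sum_abs _ _).trans
          (sum_le_sum fun i _ => ?_)))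
        · rw [abs_mul, abs_of_nonneg (hb0 _)]
          exact mul_le_mul_of_nonneg_left (ha n) (hb0 _)
        · have hdec : 0 ≤ b i - b (i + 1) := sub_nonneg.2 (hb i.le_succ)
          rw [abs_mul, abs_sub_comm, abs_of_nonneg hdec]
          exact mul_le_mul_of_nonneg_left (ha _) hdec
    _ = B * b 0 := by rw [← sum_mul, sum_range_sub']; ring

theorem abs_sum_range_sin_le {θ : ℝ} (hθ : sin (θ / 2) ≠ 0) (c : ℝ) (n : ℕ) :
    |∑ i ∈ range n, sin ((c + i) * θ)| ≤ |sin (θ / 2)|⁻¹ := by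
  set u : ℕ → ℝ := fun i => cos ((c + i - 1 / 2) * θ)
  have htelescope : 2 * sin (θ / 2) * ∑ i ∈ range n, sin ((c + i) * θ) = u 0 - u n := by
    rw [mul_sum, ← sum_range_sub']
    refine sum_congr rfl fun i _ => ?_
    simp only [u, two_mul_sin_mul_sin, ← cos_neg (θ / 2 - _), Nat.cast_add, Nat.cast_one]
    ring_nf
  have hu : |u 0 - u n| ≤ 2 :=
    (abs_sub _ _).trans <|
      (add_le_add (abs_cos_le_one _) (abs_cos_le_one _)).trans_eq one_add_one_eq_two
  have hmul : |∑ i ∈ range n, sin ((c + i) * θ)| * |sin (θ / 2)| ≤ 1 := by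
    rw [← htelescope, abs_mul, abs_mul, abs_two] at hu
    linarith
  rwa [← le_div_iff₀ (abs_pos.2 hθ), one_div] at hmul

theorem abs_sin_nat_mul_le (n : ℕ) (x : ℝ) : |sin (n * x)| ≤ n * |sin x| := by
  induction n with
  | zero => simp
  | succ n ih =>
    rw [Nat.cast_succ, add_mul, one_mul, sin_add]
    calc |sin (n * x) * cos x + cos (n * x) * sin x| ≤ |sin (n * x)| + |sin x| := by
          refine (abs_add_le _ _).trans (add_le_add ?_ ?_) <;> rw [abs_mul]
          · exact mul_le_of_le_one_right (abs_nonneg _) (abs_cos_le_one _)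
          · exact mul_le_of_le_one_left (abs_nonneg _) (abs_cos_le_one _)
      _ ≤ (n + 1) * |sin x| := by linarith

theorem abs_sum_range_sin_div_le (N : ℕ) (θ : ℝ) :
    |∑ k ∈ range N, sin ((k + 1) * θ) / (k + 1)| ≤ 2 * N * |sin (θ / 2)| := by
  calc _ ≤ ∑ k ∈ range N, |sin ((k + 1) * θ) / (k + 1)| := abs_sum_le_sum_abs _ _
    _ ≤ ∑ _k ∈ range N, 2 * |sin (θ / 2)| := sum_le_sum fun k _ => ?_
    _ = 2 * N * |sin (θ / 2)| := by rw [sum_const, card_range, nsmul_eq_mul]; ring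
  have hk : (0 : ℝ) < k + 1 := by positivity
  have h := abs_sin_nat_mul_le (2 * (k + 1)) (θ / 2)
  rw [abs_div, abs_of_pos hk, div_le_iff₀ hk]
  push_cast at h
  calc |sin ((k + 1) * θ)| = |sin (2 * (k + 1) * (θ / 2))| := by ring_nf
    _ ≤ _ := h.trans_eq (by ring)

theorem abs_sum_range_sin_div_tail_le {θ : ℝ} (hθ : sin (θ / 2) ≠ 0) (K M : ℕ) :
    |∑ i ∈ range M, sin ((K + i + 1) * θ) / (K + i + 1)|
      ≤ |sin (θ / 2)|⁻¹ * ((K : ℝ) + 1)⁻¹ := by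
  have hanti : Antitone fun i : ℕ => ((K : ℝ) + i + 1)⁻¹ := fun i j hij => by
    dsimp only
    gcongr
  have h := abs_sum_range_mul_le_of_antitone hanti (fun i => by positivity)
    (fun j => by simpa only [add_right_comm] using abs_sum_range_sin_le hθ (K + 1) j) M
  simpa only [div_eq_inv_mul, CharP.cast_eq_zero, add_zero] using h

theorem abs_sum_range_sin_div_le_three (N : ℕ) (θ : ℝ) :
    |∑ k ∈ range N, sin ((k + 1) * θ) / (k + 1)| ≤ 3 := by
  have hhead := abs_sum_range_sin_div_le
  rcases eq_or_ne (sin (θ / 2)) 0 with hθ | hθ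
  · have h := hhead N θ
    rw [hθ, abs_zero, mul_zero] at h
    linarith
  set s := |sin (θ / 2)|
  have hs : 0 < s := abs_pos.2 hθ
  set K := ⌊s⁻¹⌋₊
  have hK : K * s ≤ 1 := by
    have := mul_le_mul_of_nonneg_right (Nat.floor_le (inv_nonneg.2 hs.le)) hs.le
    rwa [inv_mul_cancel₀ hs.ne'] at this
  have hK' : 1 < (K + 1) * s := by
    have := mul_lt_mul_of_pos_right (Nat.lt_floor_add_one s⁻¹) hs
    rwa [inv_mul_cancel₀ hs.ne'] at this
  rcases le_or_gt N K with hNK | hKN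
  · calc _ ≤ 2 * N * s := hhead N θ
      _ ≤ 2 * K * s := by gcongr
      _ ≤ 3 := by linarith
  obtain ⟨M, rfl⟩ := Nat.exists_eq_add_of_le hKN.le
  rw [sum_range_add]
  have htail := abs_sum_range_sin_div_tail_le hθ K M
  push_cast
  calc _ ≤ 2 * K * s + s⁻¹ * ((K : ℝ) + 1)⁻¹ :=
        (abs_add_le _ _).trans (add_le_add (hhead K θ) htail)
    _ ≤ 2 + 1 := by
        gcongr
        · linarith
        · rw [← mul_inv, inv_le_one₀ (by positivity)]; linarith
    _ = 3 := by norm_num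

theorem integral_cos_int_mul (c : ℤ) :
    ∫ x in (0 : ℝ)..π, cos (c * x) = if c = 0 then π else 0 := by
  split_ifs with hc
  · simp [hc]
  · have hc' : (c : ℝ) ≠ 0 := Int.cast_ne_zero.2 hc
    rw [integral_comp_mul_left (fun y => cos y) hc', integral_cos, mul_zero, sin_zero, sub_zero,
      sin_int_mul_pi, smul_zero]

theorem integral_sin_nat_mul_mul_sin_nat_mul {a : ℕ} (ha : 0 < a) (b : ℕ) :
    ∫ x in (0 : ℝ)..π, sin (a * x) * sin (b * x) = if a = b then π / 2 else 0 := by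
  have hprod : ∀ x : ℝ, sin (a * x) * sin (b * x)
      = (cos (((a - b : ℤ) : ℝ) * x) - cos (((a + b : ℤ) : ℝ) * x)) / 2 := fun x => by
    rw [eq_div_iff two_ne_zero, mul_comm, ← mul_assoc, two_mul_sin_mul_sin]
    push_cast; ring_nf
  have hcont : ∀ c : ℝ, IntervalIntegrable (fun x => cos (c * x)) volume 0 π := fun c =>
    (continuous_cos.comp (continuous_const_mul c)).intervalIntegrable 0 π
  simp_rw [hprod]
  have hab : ((a + b : ℕ) : ℤ) ≠ 0 := by omega
  rw [intervalIntegral.integral_div, integral_sub (hcont _) (hcont _), integral_cos_int_mul,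
    integral_cos_int_mul]
  push_cast at hab
  rw [if_neg hab]
  simp only [sub_eq_zero, Nat.cast_inj]
  split_ifs <;> ring

theorem integral_sin_mul_sum_range_sin_div {m : ℕ} (hm : 0 < m) (n N : ℕ) :
    ∫ x in (0 : ℝ)..π, sin (m * x) * ∑ k ∈ range N, sin ((k + 1) * n * x) / (k + 1)
      = ∑ k ∈ range N, if (k + 1) * n = m then π / 2 / (k + 1) else 0 := by
  simp_rw [mul_sum]
  rw [intervalIntegral.integral_finsetSum fun k _ =>
    Continuous.intervalIntegrable (by fun_prop) _ _]
  refine sum_congr rfl fun k _ => ?_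
  have h := integral_sin_nat_mul_mul_sin_nat_mul hm ((k + 1) * n)
  push_cast at h
  simp_rw [mul_div_assoc', intervalIntegral.integral_div, h, eq_comm (a := m)]
  split_ifs <;> simp

theorem sum_range_ite_succ_mul_eq {m N : ℕ} (hm : 0 < m) (hmN : m ≤ N) (n : ℕ)
    (c : ℕ → ℝ) :
    ∑ k ∈ range N, (if (k + 1) * n = m then c (k + 1) else 0)
      = if n ∣ m then c (m / n) else 0 := by
  split_ifs with hnm
  · obtain ⟨q, rfl⟩ := hnm
    have hq : 0 < q := Nat.pos_of_mul_pos_left hm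
    have hn : 0 < n := Nat.pos_of_mul_pos_right hm
    have hiff : ∀ k, (k + 1) * n = n * q ↔ k = q - 1 := fun k => by
      rw [mul_comm, Nat.mul_left_cancel_iff hn]; omega
    simp_rw [hiff]
    have hqN : q - 1 < N := by have := Nat.le_mul_of_pos_left q hn; omega
    rw [sum_ite_eq', if_pos (mem_range.2 hqN), Nat.sub_add_cancel hq,
      Nat.mul_div_cancel_left q hn]
  · exact sum_eq_zero fun k _ => if_neg fun h => hnm ⟨k + 1, by rw [← h, mul_comm]⟩

theorem intervalIntegrable_mul_and_tendsto_integral_mul {g f : ℝ → ℝ}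
    {P : ℕ → ℝ → ℝ} {a b C : ℝ} (hg : IntervalIntegrable g volume a b)
    (hP : ∀ N, Continuous (P N))
    (hPC : ∀ N x, |P N x| ≤ C) (hPf : ∀ x, Tendsto (fun N => P N x) atTop (𝓝 (f x))) :
    IntervalIntegrable (fun x => g x * f x) volume a b ∧
      Tendsto (fun N => ∫ x in a..b, g x * P N x) atTop (𝓝 (∫ x in a..b, g x * f x)) := by
  have hfC : ∀ x, |f x| ≤ C := fun x => le_of_tendsto' (hPf x).abs fun N => hPC N x
  have hf : AEStronglyMeasurable f (volume.restrict (Set.uIoc a b)) :=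
    aestronglyMeasurable_of_tendsto_ae atTop (fun N => (hP N).aestronglyMeasurable)
      (.of_forall hPf)
  have hg' := intervalIntegrable_iff.1 hg
  refine ⟨intervalIntegrable_iff.2 (hg'.mul_bdd hf (.of_forall hfC)), ?_⟩
  refine intervalIntegral.tendsto_integral_filter_of_dominated_convergence (fun x => |g x| * C)
    (.of_forall fun N => hg'.aestronglyMeasurable.mul (hP N).aestronglyMeasurable) ?_
    (hg.abs.mul_const C) (.of_forall fun x _ => (hPf x).const_mul (g x))
  exact .of_forall fun N => .of_forall fun x _ => by
    rw [norm_mul, Real.norm_eq_abs, Real.norm_eq_abs]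
    exact mul_le_mul_of_nonneg_left (hPC N x) (abs_nonneg _)

theorem zeta_dilation_matrix_elements_general (m n : ℕ) (hm : 0 < m) (f : ℝ → ℝ)
    (hf : ∀ x : ℝ,
      Tendsto (fun N : ℕ => ∑ k ∈ Finset.range N, Real.sin ((k + 1) * n * x) / (k + 1))
        atTop (nhds (f x))) :
    IntervalIntegrable (fun x => Real.sin (m * x) * f x) MeasureTheory.volume 0 Real.pi ∧
      (2 / Real.pi) * ∫ x in (0 : ℝ)..Real.pi, Real.sin (m * x) * f x =
        if n ∣ m then (n : ℝ) / m else 0 := by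
  set P : ℕ → ℝ → ℝ := fun N x => ∑ k ∈ range N, sin ((k + 1) * n * x) / (k + 1)
  have hP_bound : ∀ N x, |P N x| ≤ 3 := fun N x => by
    simpa only [P, mul_assoc] using abs_sum_range_sin_div_le_three N (n * x)
  obtain ⟨hint, hlim⟩ := intervalIntegrable_mul_and_tendsto_integral_mul
    (g := fun x => sin (m * x)) (Continuous.intervalIntegrable (by fun_prop) 0 π)
    (fun N => by fun_prop) hP_bound hf
  refine ⟨hint, ?_⟩
  have hP_integral : ∀ᶠ N in atTop, ∫ x in (0 : ℝ)..π, sin (m * x) * P N x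
      = if n ∣ m then π / 2 / ((m / n : ℕ) : ℝ) else 0 := by
    filter_upwards [eventually_ge_atTop m] with N hN
    have h := sum_range_ite_succ_mul_eq hm hN n fun j => π / 2 / j
    push_cast at h
    rw [integral_sin_mul_sum_range_sin_div hm, h]
  rw [tendsto_nhds_unique hlim (tendsto_const_nhds.congr' (hP_integral.mono fun _ h => h.symm))]
  split_ifs with hnm
  · have hn : (n : ℝ) ≠ 0 := Nat.cast_ne_zero.2 (Nat.pos_of_dvd_of_pos hnm hm).ne'
    rw [Nat.cast_div hnm hn]
    field_simp
  · rw [mul_zero]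

/-- For positive integers `m`, `n`, let `f` be the pointwise sum of the series
`∑_{k=1}^∞ sin(k n x)/k` (which converges for every real `x`). Then the integrand
`sin(mx)·f(x)` is integrable on `[0, π]` and `(2/π)∫₀^π sin(mx) f(x) dx` equals `n/m`
if `n` divides `m`, and `0` otherwise. These are the matrix elements of `ζ(1 - i x̂ p̂)`
in the orthonormal sine basis `{√(2/π) sin(nx)}` of `L²(0, π)`. -/
theorem zeta_dilation_matrix_elements (m n : ℕ) (hm : 0 < m) (hn : 0 < n) (f : ℝ → ℝ)
    (hf : ∀ x : ℝ,
      Tendsto (fun N : ℕ => ∑ k ∈ Finset.range N, Real.sin ((k + 1) * n * x) / (k + 1))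
        atTop (nhds (f x))) :
    IntervalIntegrable (fun x => Real.sin (m * x) * f x) MeasureTheory.volume 0 Real.pi ∧
      (2 / Real.pi) * ∫ x in (0 : ℝ)..Real.pi, Real.sin (m * x) * f x =
        if n ∣ m then (n : ℝ) / m else 0 :=
  zeta_dilation_matrix_elements_general m n hm f hf
end
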